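/- arXiv:1512.04160 — 3 statements merged into one kernel-verified Lean document; each statement's English description precedes it below -/
import Mathlib

section
/- Let Γ be a connected graph with exactly three distinct distance eigenvalues δ_0 > δ_1 > δ_2. If δ_1 or δ_2 has multiplicity 1, then Γ is a complete bipartite graph. -/
/-!
By Perron–Frobenius the spectral radius `δ₀` of the distance matrix `D` is simple. If moreover
`δ₁` or `δ₂` is simple, all but two eigenvalues equal the remaining one, `δ`, so `D - δ I` has
rank at most 2 and all its `3 × 3` principal minors vanish. For three vertices with pairwise
distances `x, y, z` this reads `-δ³ + δ (x² + y² + z²) + 2 x y z = 0`.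

The graph is not complete (the distance matrix `J - I` of `Kₙ` has only the eigenvalues `-1` and
`n - 1`), so it has an induced path with distances `(1, 1, 2)`, forcing `-δ³ + 6 δ + 4 = 0`. This
rules out the distance patterns `(1, 1, 1)`, `(2, 2, 1)` and `(2, 3, 1)`: the graph is
triangle-free, has diameter 2, and every vertex is adjacent to an end of every edge. For a fixed
vertex `p` this makes the neighbourhood of `p` and its complement the two parts of a complete
bipartite graph.
-/

open SimpleGraph Matrix Finset

/-- The distance matrix of a graph, with real entries. -/
noncomputable def distMatrix {V : Type*} [Fintype V] (G : SimpleGraph V) : Matrix V V ℝ :=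
  Matrix.of fun x y => (G.dist x y : ℝ)

lemma distMatrix_isHermitian {V : Type*} [Fintype V] (G : SimpleGraph V) :
    (distMatrix G).IsHermitian := by
  ext x y
  simp [distMatrix, Matrix.conjTranspose_apply, SimpleGraph.dist_comm]

/-- The multiset of eigenvalues (with multiplicity) of the distance matrix of `G`. -/
noncomputable def distSpec {V : Type*} [Fintype V] [DecidableEq V] (G : SimpleGraph V) :
    Multiset ℝ :=
  Finset.univ.val.map (distMatrix_isHermitian G).eigenvalues

open Unitary

namespace Matrix

lemma det_submatrix_eq_zero_of_rank_lt {m n K : Type*} [Fintype n] [Field K] {k : ℕ}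
    (M : Matrix m n K) (f : Fin k → m) (g : Fin k → n) (h : M.rank < k) :
    (M.submatrix f g).det = 0 := by
  by_contra hdet
  have hfull := rank_of_isUnit _ ((isUnit_iff_isUnit_det _).mpr (Ne.isUnit hdet))
  have := rank_submatrix_le M f g
  rw [hfull, Fintype.card_fin] at this
  omega

namespace IsHermitian

variable {n : Type*} [Fintype n] [DecidableEq n] {A : Matrix n n ℝ}

lemma sub_smul_one_eq (hA : A.IsHermitian) (c : ℝ) :
    A - c • 1 = conjStarAlgAut ℝ _ hA.eigenvectorUnitary
      (diagonal fun i => hA.eigenvalues i - c) := by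
  conv_lhs => rw [hA.spectral_theorem]
  rw [← diagonal_sub, ← smul_one_eq_diagonal, map_sub, map_smul, map_one]
  rfl

lemma rank_sub_smul_one (hA : A.IsHermitian) (c : ℝ) :
    (A - c • 1).rank = Fintype.card {i // hA.eigenvalues i ≠ c} := by
  rw [hA.sub_smul_one_eq, conjStarAlgAut_apply, ← coe_star]
  simp [-isUnit_iff_ne_zero, -coe_star, rank_diagonal, sub_ne_zero]

lemma posSemidef_smul_one_sub (hA : A.IsHermitian) {c : ℝ} (hc : ∀ i, hA.eigenvalues i ≤ c) :
    (c • 1 - A).PosSemidef := by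
  rw [← neg_sub, hA.sub_smul_one_eq, ← map_neg, conjStarAlgAut_apply, diagonal_neg]
  exact (PosSemidef.diagonal fun i => by simpa using hc i).mul_mul_conjTranspose_same _

lemma dotProduct_eigenvectorBasis (hA : A.IsHermitian) (i j : n) :
    ⇑(hA.eigenvectorBasis i) ⬝ᵥ ⇑(hA.eigenvectorBasis j) = if i = j then 1 else 0 := by
  have := orthonormal_iff_ite.mp hA.eigenvectorBasis.orthonormal i j
  rw [EuclideanSpace.inner_eq_star_dotProduct] at this
  simpa [dotProduct_comm] using this

/- `z` lies in the kernel of the positive semidefinite `c • 1 - A`; nonnegative off-diagonal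
entries give `|z|ᵀ (c • 1 - A) |z| ≤ zᵀ (c • 1 - A) z = 0`, so `|z|` lies in it too. -/
lemma mulVec_abs_eq (hA : A.IsHermitian) (hoff : ∀ u v, u ≠ v → 0 ≤ A u v) {c : ℝ}
    (hc : ∀ i, hA.eigenvalues i ≤ c) {z : n → ℝ} (hz : A *ᵥ z = c • z) :
    A *ᵥ |z| = c • |z| := by
  have hB := hA.posSemidef_smul_one_sub hc
  have hB_apply (x : n → ℝ) : (c • 1 - A) *ᵥ x = c • x - A *ᵥ x := by
    rw [sub_mulVec, smul_mulVec, one_mulVec]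
  have hquad : z ⬝ᵥ (A *ᵥ z) ≤ |z| ⬝ᵥ (A *ᵥ |z|) := by
    simp only [dotProduct, mulVec, Finset.mul_sum]
    refine sum_le_sum fun u _ => sum_le_sum fun v _ => ?_
    rcases eq_or_ne u v with rfl | huv
    · simp only [Pi.abs_apply]
      exact le_of_eq (by linear_combination (-A u u) * abs_mul_abs_self (z u))
    · have := mul_le_mul_of_nonneg_left (le_abs_self (z u * z v)) (hoff u v huv)
      simp only [Pi.abs_apply, abs_mul] at this ⊢
      linarith
  have hnorm : |z| ⬝ᵥ |z| = z ⬝ᵥ z := by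
    simp only [dotProduct, Pi.abs_apply, abs_mul_abs_self]
  have hzero : |z| ⬝ᵥ ((c • 1 - A) *ᵥ |z|) = 0 := by
    refine le_antisymm ?_ (by simpa using hB.dotProduct_mulVec_nonneg |z|)
    rw [hB_apply, dotProduct_sub, dotProduct_smul, hnorm, smul_eq_mul, ← smul_eq_mul,
      ← dotProduct_smul, ← hz]
    linarith
  have := (hB.dotProduct_mulVec_zero_iff |z|).mp (by simpa using hzero)
  rw [hB_apply, sub_eq_zero] at this
  exact this.symm

lemma apply_ne_zero_of_mulVec_eq (hA : A.IsHermitian) (hpos : ∀ u v, u ≠ v → 0 < A u v)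
    {c : ℝ} (hc : ∀ i, hA.eigenvalues i ≤ c) {z : n → ℝ} (hz : A *ᵥ z = c • z) (hz0 : z ≠ 0)
    (u : n) : z u ≠ 0 := by
  intro hu
  have hrow : ∑ v, A u v * |z v| = 0 := by
    simpa [mulVec, dotProduct, hu] using
      congrFun (hA.mulVec_abs_eq (fun u v h => (hpos u v h).le) hc hz) u
  have hterm : ∀ v ∈ univ, 0 ≤ A u v * |z v| := fun v _ => by
    rcases eq_or_ne u v with rfl | huv
    · simp [hu]
    · exact mul_nonneg (hpos u v huv).le (abs_nonneg _)
  refine hz0 (funext fun v => ?_)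
  rcases eq_or_ne u v with rfl | huv
  · exact hu
  · simpa [(hpos u v huv).ne'] using (sum_eq_zero_iff_of_nonneg hterm).mp hrow v (mem_univ v)

lemma eq_of_eigenvalues_eq (hA : A.IsHermitian) {c : ℝ}
    (hnz : ∀ z : n → ℝ, A *ᵥ z = c • z → z ≠ 0 → ∀ u, z u ≠ 0)
    {i j : n} (hi : hA.eigenvalues i = c) (hj : hA.eigenvalues j = c) : i = j := by
  by_contra hij
  set v := ⇑(hA.eigenvectorBasis i)
  set w := ⇑(hA.eigenvectorBasis j)
  have hv : A *ᵥ v = c • v := hi ▸ hA.mulVec_eigenvectorBasis i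
  have hw : A *ᵥ w = c • w := hj ▸ hA.mulVec_eigenvectorBasis j
  have hw0 : w ≠ 0 := fun h => by
    simpa [w, h] using hA.dotProduct_eigenvectorBasis j j
  -- this `c`-eigenvector vanishes at `i`, hence everywhere
  have hcomb : w i • v - v i • w = 0 := by
    by_contra h
    refine hnz _ ?_ h i ?_
    · rw [mulVec_sub, mulVec_smul, mulVec_smul, hv, hw, smul_sub, smul_comm, smul_comm c (v i)]
    · simp [mul_comm]
  have := congrArg (v ⬝ᵥ ·) hcomb
  simp only [dotProduct_sub, dotProduct_smul, v, w, hA.dotProduct_eigenvectorBasis, hij] at this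
  exact hnz w hw hw0 i (by simpa using this)

end IsHermitian

end Matrix

namespace SimpleGraph

variable {V : Type*}

lemma Walk.dist_getVert_of_length_eq_dist {G : SimpleGraph V} {u v : V} (p : G.Walk u v)
    (hp : p.length = G.dist u v) {k : ℕ} (hk : k ≤ p.length) : G.dist u (p.getVert k) = k := by
  simpa [hk] using (length_eq_dist_of_subwalk hp (p.isSubwalk_take k)).symm

def isoCompleteBipartiteGraphOfAdjIff {G : SimpleGraph V} (P : V → Prop) [DecidablePred P]
    (h : ∀ u v, G.Adj u v ↔ (P u ↔ ¬ P v)) :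
    G ≃g completeBipartiteGraph {x // P x} {x // ¬ P x} where
  toEquiv := (Equiv.sumCompl P).symm
  map_rel_iff' {u v} := by
    by_cases hu : P u <;> by_cases hv : P v <;> simp [Equiv.sumCompl_symm_apply_of_pos,
      Equiv.sumCompl_symm_apply_of_neg, hu, hv, h]

lemma exists_iso_completeBipartiteGraph [Fintype V] {G : SimpleGraph V}
    (htri : ∀ a b c, G.Adj a b → G.Adj a c → ¬ G.Adj b c)
    (hdom : ∀ u v w, G.Adj v w → u ≠ v → u ≠ w → G.Adj u v ∨ G.Adj u w) {p q : V}
    (hpq : G.Adj p q) :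
    ∃ a b : ℕ, 0 < a ∧ 0 < b ∧ Nonempty (G ≃g completeBipartiteGraph (Fin a) (Fin b)) := by
  classical
  have hcross : ∀ u v, G.Adj p u → ¬ G.Adj p v → G.Adj u v := by
    intro u v hu hv
    rcases eq_or_ne v p with rfl | hvp
    · exact hu.symm
    · rcases hdom v p u hu hvp (by rintro rfl; exact hv hu) with h | h
      · exact absurd h.symm hv
      · exact h.symm
  have hadj : ∀ u v, G.Adj u v ↔ (G.Adj p u ↔ ¬ G.Adj p v) := by
    refine fun u v => ⟨fun huv => ⟨fun hu hv => htri p u v hu hv huv, fun hv => ?_⟩, fun h => ?_⟩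
    · by_contra hu
      rcases hdom p u v huv (by rintro rfl; exact hv huv) (by rintro rfl; exact hu huv.symm)
        with h | h <;> contradiction
    · by_cases hu : G.Adj p u
      · exact hcross u v hu (h.mp hu)
      · exact (hcross v u (by tauto) hu).symm
  exact ⟨_, _, Fintype.card_pos_iff.mpr ⟨⟨q, hpq⟩⟩, Fintype.card_pos_iff.mpr ⟨⟨p, G.irrefl⟩⟩,
    ⟨(isoCompleteBipartiteGraphOfAdjIff _ hadj).trans
      (completeBipartiteGraphCongr (Fintype.equivFin _) (Fintype.equivFin _))⟩⟩

end SimpleGraph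

section DistanceMatrix

variable {V : Type*} [Fintype V] {G : SimpleGraph V}

lemma distMatrix_pos_of_ne (hconn : G.Connected) {u v : V} (h : u ≠ v) :
    0 < distMatrix G u v := by
  simpa [distMatrix] using hconn.pos_dist_of_ne h

variable [DecidableEq V]

lemma count_distSpec (t : ℝ) :
    (distSpec G).count t = #{i | (distMatrix_isHermitian G).eigenvalues i = t} := by
  simp [distSpec, Multiset.count_map, Finset.filter, eq_comm]

-- Perron–Frobenius: `D` has positive off-diagonal entries.
lemma card_eigenvalues_distMatrix_eq_le_one (hconn : G.Connected) {c : ℝ}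
    (hc : ∀ i, (distMatrix_isHermitian G).eigenvalues i ≤ c) :
    #{i | (distMatrix_isHermitian G).eigenvalues i = c} ≤ 1 := by
  have hD := distMatrix_isHermitian G
  refine card_le_one.mpr fun i hi j hj => hD.eq_of_eigenvalues_eq (fun z hz hz0 =>
    hD.apply_ne_zero_of_mulVec_eq (fun u v h => distMatrix_pos_of_ne hconn h) hc hz hz0)
    (by simpa using hi) (by simpa using hj)

lemma rank_distMatrix_sub_smul_one_le_two (hconn : G.Connected) {δ₀ δa δb : ℝ}
    (hval : ∀ i, (distMatrix_isHermitian G).eigenvalues i = δ₀ ∨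
      (distMatrix_isHermitian G).eigenvalues i = δa ∨ (distMatrix_isHermitian G).eigenvalues i = δb)
    (hmax : ∀ i, (distMatrix_isHermitian G).eigenvalues i ≤ δ₀)
    (ha : (distSpec G).count δa = 1) :
    (distMatrix G - δb • 1).rank ≤ 2 := by
  rw [(distMatrix_isHermitian G).rank_sub_smul_one, Fintype.card_subtype]
  calc #{i | (distMatrix_isHermitian G).eigenvalues i ≠ δb}
      ≤ #(({i | (distMatrix_isHermitian G).eigenvalues i = δ₀} : Finset V) ∪
          ({i | (distMatrix_isHermitian G).eigenvalues i = δa} : Finset V)) :=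
        card_le_card fun i => by have := hval i; simp; tauto
    _ ≤ 1 + 1 := (card_union_le _ _).trans <|
        add_le_add (card_eigenvalues_distMatrix_eq_le_one hconn hmax)
          (by rw [← count_distSpec, ha])

lemma eigenvalues_distMatrix_of_forall_adj (h : ∀ u v, u ≠ v → G.Adj u v) (i : V) :
    (distMatrix_isHermitian G).eigenvalues i = -1 ∨
      (distMatrix_isHermitian G).eigenvalues i = Fintype.card V - 1 := by
  set t := (distMatrix_isHermitian G).eigenvalues i
  set v := ⇑((distMatrix_isHermitian G).eigenvectorBasis i)
  have hJ :
      (distMatrix G + 1) * (distMatrix G + 1) = (Fintype.card V : ℝ) • (distMatrix G + 1) := by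
    have : distMatrix G + 1 = of fun _ _ => 1 := by
      ext u w
      rcases eq_or_ne u w with rfl | huw
      · simp [distMatrix]
      · simp [distMatrix, huw, h u w huw]
    rw [this]
    ext
    simp [mul_apply]
  have hv : (distMatrix G + 1) *ᵥ v = (t + 1) • v := by
    rw [add_mulVec, (distMatrix_isHermitian G).mulVec_eigenvectorBasis, one_mulVec, add_smul,
      one_smul]
  have hv0 : v ≠ 0 := fun h0 => by
    simpa [v, h0] using (distMatrix_isHermitian G).dotProduct_eigenvectorBasis i i
  have := congrArg (· *ᵥ v) hJ
  simp only [← mulVec_mulVec, hv, mulVec_smul, smul_mulVec, smul_smul] at this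
  have hroot : (t + 1) * (t - (Fintype.card V - 1)) = 0 := by
    linear_combination smul_left_injective ℝ hv0 this
  rcases mul_eq_zero.mp hroot with h | h
  · exact Or.inl (by linarith)
  · exact Or.inr (by linarith)

lemma det_submatrix_distMatrix_sub_smul_one (δ : ℝ) {a b c : V} (hab : a ≠ b) (hac : a ≠ c)
    (hbc : b ≠ c) :
    ((distMatrix G - δ • 1).submatrix ![a, b, c] ![a, b, c]).det =
      -δ ^ 3 + δ * (G.dist a b ^ 2 + G.dist a c ^ 2 + G.dist b c ^ 2) +
        2 * G.dist a b * G.dist a c * G.dist b c := by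
  rw [det_fin_three]
  simp [distMatrix, one_apply, hab, hac, hbc, hab.symm, hac.symm, hbc.symm,
    dist_comm (u := b) (v := a), dist_comm (u := c) (v := a), dist_comm (u := c) (v := b)]
  ring

lemma exists_not_adj_of_three_eigenvalues {δ₀ δ₁ δ₂ : ℝ} (h21 : δ₂ < δ₁) (h10 : δ₁ < δ₀)
    (h₀ : ∃ i, (distMatrix_isHermitian G).eigenvalues i = δ₀)
    (h₁ : ∃ i, (distMatrix_isHermitian G).eigenvalues i = δ₁)
    (h₂ : ∃ i, (distMatrix_isHermitian G).eigenvalues i = δ₂) :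
    ∃ p q, p ≠ q ∧ ¬ G.Adj p q := by
  by_contra! hcomplete
  obtain ⟨⟨i₀, rfl⟩, ⟨i₁, rfl⟩, ⟨i₂, rfl⟩⟩ := And.intro h₀ (And.intro h₁ h₂)
  rcases eigenvalues_distMatrix_of_forall_adj hcomplete i₀ with h | h <;>
  rcases eigenvalues_distMatrix_of_forall_adj hcomplete i₁ with h' | h' <;>
  rcases eigenvalues_distMatrix_of_forall_adj hcomplete i₂ with h'' | h'' <;>
  linarith

end DistanceMatrix

section RankTwo

variable {V : Type*} [Fintype V] [DecidableEq V] {G : SimpleGraph V} {δ : ℝ}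

lemma cubic_eq_zero_of_rank_le_two (hrank : (distMatrix G - δ • 1).rank ≤ 2) {a b c : V}
    {x y z : ℕ} (hab : G.dist a b = x) (hac : G.dist a c = y) (hbc : G.dist b c = z)
    (hx : 0 < x) (hy : 0 < y) (hz : 0 < z) :
    -δ ^ 3 + δ * (x ^ 2 + y ^ 2 + z ^ 2) + 2 * x * y * z = 0 := by
  have ne_of_dist {u v : V} {k : ℕ} (h : G.dist u v = k) (hk : 0 < k) : u ≠ v := by
    rintro rfl
    simp at h
    omega
  rw [← hab, ← hac, ← hbc, ← det_submatrix_distMatrix_sub_smul_one δ (ne_of_dist hab hx)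
    (ne_of_dist hac hy) (ne_of_dist hbc hz)]
  exact det_submatrix_eq_zero_of_rank_lt _ _ _ (by omega)

lemma cubic_eq_zero_of_not_adj (hconn : G.Connected)
    (hrank : (distMatrix G - δ • 1).rank ≤ 2) {p q : V} (hpq : p ≠ q) (hnadj : ¬ G.Adj p q) :
    -δ ^ 3 + 6 * δ + 4 = 0 := by
  obtain ⟨w, hw⟩ := hconn.exists_walk_length_eq_dist p q
  obtain ⟨x, a, b, hxa, hab, hxb, hne⟩ :=
    w.exists_adj_adj_not_adj_ne hw (hconn.one_lt_dist_of_ne_of_not_adj hpq hnadj)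
  have hdist : G.dist x b = 2 := le_antisymm
    (by simpa using dist_le (.cons hxa (.cons hab .nil)))
    (hconn.one_lt_dist_of_ne_of_not_adj hne hxb)
  have := cubic_eq_zero_of_rank_le_two hrank (dist_eq_one_iff_adj.mpr hxa) hdist
    (dist_eq_one_iff_adj.mpr hab) one_pos two_pos one_pos
  push_cast at this
  linarith

lemma not_adj_of_rank_le_two (hrank : (distMatrix G - δ • 1).rank ≤ 2)
    (hδ : -δ ^ 3 + 6 * δ + 4 = 0) {a b c : V} (hab : G.Adj a b) (hac : G.Adj a c) :
    ¬ G.Adj b c := by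
  intro hbc
  have := cubic_eq_zero_of_rank_le_two hrank (dist_eq_one_iff_adj.mpr hab)
    (dist_eq_one_iff_adj.mpr hac) (dist_eq_one_iff_adj.mpr hbc) one_pos one_pos one_pos
  push_cast at this
  rw [show δ = -2 / 3 by linarith] at hδ
  norm_num at hδ

lemma dist_le_two_of_rank_le_two (hconn : G.Connected)
    (hrank : (distMatrix G - δ • 1).rank ≤ 2) (hδ : -δ ^ 3 + 6 * δ + 4 = 0) (u v : V) :
    G.dist u v ≤ 2 := by
  by_contra! h
  obtain ⟨p, hp⟩ := hconn.exists_walk_length_eq_dist u v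
  have := cubic_eq_zero_of_rank_le_two hrank
    (p.dist_getVert_of_length_eq_dist hp (k := 2) (by omega))
    (p.dist_getVert_of_length_eq_dist hp (k := 3) (by omega))
    (dist_eq_one_iff_adj.mpr (p.adj_getVert_succ (i := 2) (by omega))) two_pos three_pos one_pos
  push_cast at this
  rw [show δ = -1 by linarith] at hδ
  norm_num at hδ

lemma adj_or_adj_of_rank_le_two (hconn : G.Connected)
    (hrank : (distMatrix G - δ • 1).rank ≤ 2) (hδ : -δ ^ 3 + 6 * δ + 4 = 0) {u v w : V}
    (hvw : G.Adj v w) (huv : u ≠ v) (huw : u ≠ w) : G.Adj u v ∨ G.Adj u w := by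
  by_contra! h
  have hdist {x : V} (hux : u ≠ x) (hn : ¬ G.Adj u x) : G.dist u x = 2 :=
    le_antisymm (dist_le_two_of_rank_le_two hconn hrank hδ u x)
      (hconn.one_lt_dist_of_ne_of_not_adj hux hn)
  have := cubic_eq_zero_of_rank_le_two hrank (hdist huv h.1) (hdist huw h.2)
    (dist_eq_one_iff_adj.mpr hvw) two_pos two_pos one_pos
  push_cast at this
  rw [show δ = -4 / 3 by linarith] at hδ
  norm_num at hδ

theorem exists_iso_completeBipartiteGraph_of_rank_le_two (hconn : G.Connected)
    (hrank : (distMatrix G - δ • 1).rank ≤ 2) {p q : V} (hpq : p ≠ q) (hnadj : ¬ G.Adj p q) :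
    ∃ a b : ℕ, 0 < a ∧ 0 < b ∧ Nonempty (G ≃g completeBipartiteGraph (Fin a) (Fin b)) := by
  have hδ := cubic_eq_zero_of_not_adj hconn hrank hpq hnadj
  obtain ⟨w⟩ := hconn.preconnected p q
  exact exists_iso_completeBipartiteGraph (fun _ _ _ => not_adj_of_rank_le_two hrank hδ)
    (fun _ _ _ => adj_or_adj_of_rank_le_two hconn hrank hδ) (w.adj_snd (Walk.not_nil_of_ne hpq))

end RankTwo

theorem dcube_stmt9_general {V : Type*} [Fintype V] [DecidableEq V] (G : SimpleGraph V)
    (hconn : G.Connected)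
    (δ0 δ1 δ2 : ℝ) (h21 : δ2 < δ1) (h10 : δ1 < δ0)
    (hspec : (distSpec G).toFinset = {δ0, δ1, δ2})
    (hsimple : (distSpec G).count δ1 = 1 ∨ (distSpec G).count δ2 = 1) :
    ∃ a b : ℕ, 0 < a ∧ 0 < b ∧
      Nonempty (G ≃g completeBipartiteGraph (Fin a) (Fin b)) := by
  have hmem (t : ℝ) :
      (∃ i, (distMatrix_isHermitian G).eigenvalues i = t) ↔ t = δ0 ∨ t = δ1 ∨ t = δ2 := by
    simpa [distSpec] using congrArg (t ∈ ·) hspec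
  have hval (i : V) := (hmem _).mp ⟨i, rfl⟩
  have hmax (i : V) : (distMatrix_isHermitian G).eigenvalues i ≤ δ0 := by
    rcases hval i with h | h | h <;> linarith
  obtain ⟨δ, hrank⟩ : ∃ δ : ℝ, (distMatrix G - δ • 1).rank ≤ 2 := by
    rcases hsimple with h | h
    · exact ⟨δ2, rank_distMatrix_sub_smul_one_le_two hconn hval hmax h⟩
    · exact ⟨δ1, rank_distMatrix_sub_smul_one_le_two hconn (fun i => (hval i).imp_right Or.symm)
        hmax h⟩
  obtain ⟨p, q, hpq, hnadj⟩ := exists_not_adj_of_three_eigenvalues h21 h10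
    ((hmem δ0).mpr (by simp)) ((hmem δ1).mpr (by simp)) ((hmem δ2).mpr (by simp))
  exact exists_iso_completeBipartiteGraph_of_rank_le_two hconn hrank hpq hnadj

theorem dcube_stmt9 {V : Type*} [Fintype V] [DecidableEq V] (G : SimpleGraph V)
    (hn : 3 ≤ Fintype.card V) (hconn : G.Connected)
    (δ0 δ1 δ2 : ℝ) (h21 : δ2 < δ1) (h10 : δ1 < δ0)
    (hspec : (distSpec G).toFinset = {δ0, δ1, δ2})
    (hsimple : (distSpec G).count δ1 = 1 ∨ (distSpec G).count δ2 = 1) :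
    ∃ a b : ℕ, 0 < a ∧ 0 < b ∧
      Nonempty (G ≃g completeBipartiteGraph (Fin a) (Fin b)) :=
  dcube_stmt9_general G hconn δ0 δ1 δ2 h21 h10 hspec hsimple
end

section
/- Let Γ be a connected n-vertex graph with exactly three distinct distance eigenvalues δ_0 > δ_1 > δ_2 having multiplicities 1, m_1, m_2 with m_1 = m_2 = m ≥ 2. Then n = 2m+1 is odd and δ_0 = c(n-1)/2 for some integer c ≥ 3. -/
/-!
Counting eigenvalues gives `n = 2m + 1`, and since the distance matrix has zero trace,
`δ₀ = -m (δ₁ + δ₂)`. The characteristic polynomial of the distance matrix has integer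
coefficients and only real roots, and Galois-conjugate roots of a rational polynomial have equal
multiplicities. As `δ₀` is the only eigenvalue of multiplicity one, it is rational; hence
`δ₁ + δ₂ = -δ₀ / m` is a rational algebraic integer, i.e. an integer `-c`, and
`δ₀ = c m = c (n - 1) / 2`.

A complete graph has only the distance eigenvalues `-1` and `n - 1`, so `Γ` is not complete and
the sum of all distances exceeds `n (n - 1)`. Testing the distance matrix against the all-ones
vector then gives `δ₀ > n - 1 = 2m`, i.e. `c ≥ 3`.
-/

open SimpleGraph Matrix Finset

open Polynomial

theorem Multiset.eq_count_nsmul_add_of_toFinset_eq {α : Type*} [DecidableEq α] {s : Multiset α}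
    {a b c : α} (hab : a ≠ b) (hac : a ≠ c) (hbc : b ≠ c) (hs : s.toFinset = {a, b, c}) :
    s = s.count a • {a} + s.count b • {b} + s.count c • {c} := by
  conv_lhs => rw [← Multiset.toFinset_sum_count_nsmul_eq s, hs]
  rw [Finset.sum_insert (by simp [hab, hac]), Finset.sum_insert (by simp [hbc]),
    Finset.sum_singleton, add_assoc]

theorem Matrix.IsHermitian.dotProduct_mulVec_le_of_eigenvalues_le {n : Type*} [Fintype n]
    [DecidableEq n] {A : Matrix n n ℝ} (hA : A.IsHermitian) {μ : ℝ}
    (hμ : ∀ i, hA.eigenvalues i ≤ μ) (v : n → ℝ) : v ⬝ᵥ (A *ᵥ v) ≤ μ * (v ⬝ᵥ v) := by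
  have hpos : (algebraMap ℝ (Matrix n n ℝ) μ - A).PosSemidef := by
    refine posSemidef_iff_isHermitian_and_spectrum_nonneg.mpr
      ⟨(IsSelfAdjoint.algebraMap _ (.all μ)).sub hA, ?_⟩
    rw [← spectrum.singleton_sub_eq, hA.spectrum_real_eq_range_eigenvalues]
    rintro _ ⟨_, rfl, _, ⟨i, rfl⟩, rfl⟩
    exact sub_nonneg.mpr (hμ i)
  simpa [sub_mulVec, Algebra.algebraMap_eq_smul_one, dotProduct_sub, smul_mulVec] using
    hpos.dotProduct_mulVec_nonneg v

theorem Matrix.isIntegral_of_isRoot_charpoly_map {n S R : Type*} [Fintype n] [DecidableEq n]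
    [CommRing S] [CommRing R] [Algebra S R] (M : Matrix n n S) {x : R}
    (hx : (M.map (algebraMap S R)).charpoly.IsRoot x) : IsIntegral S x :=
  ⟨M.charpoly, M.charpoly_monic, by rwa [charpoly_map, IsRoot, eval_map] at hx⟩

theorem eq_neg_one_or_eq_card_sub_one_of_mulVec_eq_smul {V : Type*} [Fintype V] [DecidableEq V]
    {v : V → ℝ} (hv : v ≠ 0) {δ : ℝ} (h : (Matrix.of (fun _ _ => 1) - 1) *ᵥ v = δ • v) :
    δ = -1 ∨ δ = Fintype.card V - 1 := by
  by_contra! hδ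
  rw [sub_mulVec, one_mulVec] at h
  have hcoord : ∀ x, ∑ y, v y - v x = δ * v x := fun x => by
    simpa [mulVec, dotProduct] using congrFun h x
  have hsum : ∑ y, v y = 0 := by
    have := Finset.sum_congr rfl fun x (_ : x ∈ univ) => hcoord x
    rw [sum_sub_distrib, ← mul_sum, sum_const, card_univ, nsmul_eq_mul] at this
    have : (Fintype.card V - 1 - δ) * ∑ y, v y = 0 := by linarith
    exact (mul_eq_zero.mp this).resolve_left (sub_ne_zero.mpr fun h => hδ.2 (by linarith))
  refine hv (funext fun x => ?_)
  have : (δ + 1) * v x = 0 := by linarith [hcoord x]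
  exact (mul_eq_zero.mp this).resolve_left fun h => hδ.1 (by linarith)

section ConjugateRoots

variable {K L : Type*} [Field K] [PerfectField K] [Field L] [DecidableEq L] [Algebra K L]

theorem count_roots_map_eq_of_minpoly_eq {P : K[X]} (hP : P ≠ 0) {α β : L}
    (hα : IsIntegral K α) (hαβ : minpoly K α = minpoly K β) :
    (P.map (algebraMap K L)).roots.count α = (P.map (algebraMap K L)).roots.count β := by
  have hirr := minpoly.irreducible hα
  -- Write `P = μ ^ a * g` with `μ ∤ g`: every root of the separable `μ` is a simple root of `μ`
  -- and not a root of `g`, so it has multiplicity exactly `a` in `P`.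
  obtain ⟨a, g, hg, rfl⟩ := WfDvdMonoid.max_power_factor hP hirr
  have hsep : ((minpoly K α).map (algebraMap K L)).Separable :=
    (PerfectField.separable_of_irreducible hirr).map
  have count_eq : ∀ γ : L, minpoly K γ = minpoly K α →
      (((minpoly K α) ^ a * g).map (algebraMap K L)).roots.count γ = a := by
    intro γ hγ
    have hroot : γ ∈ ((minpoly K α).map (algebraMap K L)).roots := by
      rw [mem_roots (Polynomial.map_ne_zero (minpoly.ne_zero hα)), IsRoot, eval_map_algebraMap,
        ← hγ, minpoly.aeval]
    have hgγ : γ ∉ (g.map (algebraMap K L)).roots := fun h =>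
      hg (hγ ▸ minpoly.dvd K γ ((eval_map_algebraMap _ _).symm.trans (mem_roots'.mp h).2))
    have hne := Polynomial.map_ne_zero (f := algebraMap K L) hP
    rw [Polynomial.map_mul, Polynomial.map_pow] at hne ⊢
    rw [roots_mul hne, roots_pow, Multiset.count_add, Multiset.count_nsmul,
      Multiset.count_eq_one_of_mem (nodup_roots hsep) hroot, Multiset.count_eq_zero.mpr hgγ,
      mul_one, add_zero]
  rw [count_eq α rfl, count_eq β hαβ.symm]

theorem mem_range_algebraMap_of_count_roots_unique {P : K[X]} (hP : P ≠ 0)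
    (hsplit : (P.map (algebraMap K L)).Splits) {α : L} (hα : aeval α P = 0)
    (huniq : ∀ β, (P.map (algebraMap K L)).roots.count β =
      (P.map (algebraMap K L)).roots.count α → β = α) :
    α ∈ (algebraMap K L).range := by
  have hint : IsIntegral K α := IsAlgebraic.isIntegral ⟨P, hP, hα⟩
  set μ := (minpoly K α).map (algebraMap K L)
  have hμ : μ.Splits := hsplit.of_dvd (Polynomial.map_ne_zero hP)
    (Polynomial.map_dvd _ (minpoly.dvd K α hα))
  have hroots : μ.roots ≤ {α} := by
    rw [Multiset.le_iff_subset (nodup_roots (PerfectField.separable_of_irreducible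
      (minpoly.irreducible hint)).map)]
    intro β hβ
    refine Multiset.mem_singleton.mpr (huniq β (count_roots_map_eq_of_minpoly_eq hP hint ?_).symm)
    refine minpoly.eq_of_irreducible_of_monic (minpoly.irreducible hint) ?_ (minpoly.monic hint)
    rw [← eval_map_algebraMap]
    exact (mem_roots'.mp hβ).2
  refine minpoly.natDegree_eq_one_iff.mp (le_antisymm ?_ (minpoly.natDegree_pos hint))
  calc (minpoly K α).natDegree = Multiset.card μ.roots := by
        rw [← hμ.natDegree_eq_card_roots, natDegree_map]
    _ ≤ 1 := by simpa using Multiset.card_le_card hroots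

end ConjugateRoots

theorem exists_intCast_eq_of_isIntegral {L : Type*} [Field L] [CharZero L] {x : L}
    (hx : IsIntegral ℤ x) (hq : x ∈ (algebraMap ℚ L).range) : ∃ z : ℤ, x = z := by
  obtain ⟨q, rfl⟩ := hq
  have : IsIntegral ℤ q := (isIntegral_algebraMap_iff (algebraMap ℚ L).injective).mp hx
  obtain ⟨z, rfl⟩ := IsIntegrallyClosed.isIntegral_iff.mp this
  exact ⟨z, by simp⟩

noncomputable def intDistMatrix {V : Type*} (G : SimpleGraph V) : Matrix V V ℤ :=
  Matrix.of fun x y => (G.dist x y : ℤ)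

section DistanceSpectrum

variable {V : Type*} [Fintype V] (G : SimpleGraph V)

theorem intDistMatrix_map : (intDistMatrix G).map (algebraMap ℤ ℝ) = distMatrix G := by
  ext x y
  simp [intDistMatrix, distMatrix]

theorem trace_distMatrix : (distMatrix G).trace = 0 := by
  simp [trace, distMatrix]

theorem card_mul_card_sub_one_lt_sum_dist (hconn : G.Connected) (hG : G ≠ ⊤) :
    (Fintype.card V : ℝ) * (Fintype.card V - 1) < ∑ x, ∑ y, (G.dist x y : ℝ) := by
  classical
  obtain ⟨a, b, hab, hnadj⟩ := ne_top_iff_exists_not_adj.mp hG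
  have hle : ∀ x y, ((⊤ : SimpleGraph V).dist x y : ℝ) ≤ G.dist x y := fun x y => by
    exact_mod_cast (hconn.preconnected x y).dist_anti le_top
  have hlt : ((⊤ : SimpleGraph V).dist a b : ℝ) < G.dist a b := by
    have hpos := hconn.pos_dist_of_ne hab
    have hne : G.dist a b ≠ 1 := mt dist_eq_one_iff_adj.mp hnadj
    rw [dist_top_of_ne hab]
    exact_mod_cast (by omega : 1 < G.dist a b)
  calc (Fintype.card V : ℝ) * (Fintype.card V - 1)
      = ∑ x, ∑ y, ((⊤ : SimpleGraph V).dist x y : ℝ) := by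
        have hite : ∀ x y : V, (if x = y then 0 else 1 : ℝ) = 1 - if x = y then 1 else 0 := by
          intros; split_ifs <;> norm_num
        simp [dist_top, hite, sum_sub_distrib]
        ring
    _ < ∑ x, ∑ y, (G.dist x y : ℝ) :=
      sum_lt_sum (fun x _ => sum_le_sum fun y _ => hle x y)
        ⟨a, mem_univ _, sum_lt_sum (fun y _ => hle a y) ⟨b, mem_univ _, hlt⟩⟩

variable [DecidableEq V]

theorem distMatrix_top : distMatrix (⊤ : SimpleGraph V) = Matrix.of (fun _ _ => 1) - 1 := by
  ext x y
  by_cases h : x = y <;> simp [distMatrix, dist_top, h]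

theorem eq_neg_one_or_eq_card_sub_one_of_mem_distSpec_top {δ : ℝ}
    (hδ : δ ∈ distSpec (⊤ : SimpleGraph V)) : δ = -1 ∨ δ = Fintype.card V - 1 := by
  obtain ⟨i, -, rfl⟩ := Multiset.mem_map.mp hδ
  set hA := distMatrix_isHermitian (⊤ : SimpleGraph V)
  have heig : (Matrix.of (fun _ _ => 1) - 1) *ᵥ ⇑(hA.eigenvectorBasis i) =
      hA.eigenvalues i • ⇑(hA.eigenvectorBasis i) := by
    rw [← distMatrix_top]
    exact hA.mulVec_eigenvectorBasis i
  refine eq_neg_one_or_eq_card_sub_one_of_mulVec_eq_smul ?_ heig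
  exact fun h => hA.eigenvectorBasis.orthonormal.ne_zero i (by ext x; exact congrFun h x)

theorem ne_top_of_two_lt_card_toFinset_distSpec (hG : 2 < (distSpec G).toFinset.card) :
    G ≠ ⊤ := by
  rintro rfl
  have hsub : (distSpec (⊤ : SimpleGraph V)).toFinset ⊆ {-1, (Fintype.card V : ℝ) - 1} :=
    fun δ hδ => by
      simpa using eq_neg_one_or_eq_card_sub_one_of_mem_distSpec_top (Multiset.mem_toFinset.mp hδ)
  have := (card_le_card hsub).trans card_le_two
  omega

theorem card_distSpec : Multiset.card (distSpec G) = Fintype.card V := by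
  simp [distSpec]

theorem sum_distSpec : (distSpec G).sum = 0 := by
  rw [← trace_distMatrix G, (distMatrix_isHermitian G).trace_eq_sum_eigenvalues]
  simp [distSpec, sum_eq_multiset_sum, -sum_map_val]

theorem distSpec_eq_roots_charpoly : distSpec G = (distMatrix G).charpoly.roots := by
  rw [(distMatrix_isHermitian G).roots_charpoly_eq_eigenvalues]
  simp [distSpec]

theorem isIntegral_of_mem_distSpec {δ : ℝ} (hδ : δ ∈ distSpec G) : IsIntegral ℤ δ := by
  rw [distSpec_eq_roots_charpoly, ← intDistMatrix_map] at hδ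
  exact (intDistMatrix G).isIntegral_of_isRoot_charpoly_map (isRoot_of_mem_roots hδ)

theorem mem_range_algebraMap_of_count_distSpec_unique {δ : ℝ} (hδ : δ ∈ distSpec G)
    (huniq : ∀ β, (distSpec G).count β = (distSpec G).count δ → β = δ) :
    δ ∈ (algebraMap ℚ ℝ).range := by
  set P : ℚ[X] := (intDistMatrix G).charpoly.map (algebraMap ℤ ℚ)
  have hP : P.map (algebraMap ℚ ℝ) = (distMatrix G).charpoly := by
    rw [Polynomial.map_map, ← IsScalarTower.algebraMap_eq, ← charpoly_map, intDistMatrix_map]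
  rw [distSpec_eq_roots_charpoly, ← hP] at hδ huniq
  refine mem_range_algebraMap_of_count_roots_unique
    ((intDistMatrix G).charpoly_monic.map _).ne_zero
    (hP ▸ (distMatrix_isHermitian G).splits_charpoly) ?_ huniq
  rw [← eval_map_algebraMap]
  exact isRoot_of_mem_roots hδ

theorem card_sub_one_lt_of_forall_mem_distSpec_le (hconn : G.Connected) (hG : G ≠ ⊤) {μ : ℝ}
    (hμ : ∀ δ ∈ distSpec G, δ ≤ μ) : (Fintype.card V : ℝ) - 1 < μ := by
  have hray := (distMatrix_isHermitian G).dotProduct_mulVec_le_of_eigenvalues_le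
    (fun i => hμ _ (Multiset.mem_map_of_mem _ (mem_univ i))) (fun _ => 1)
  have hlt := card_mul_card_sub_one_lt_sum_dist G hconn hG
  have hcard : (0 : ℝ) < Fintype.card V := by
    have := hconn.nonempty
    exact_mod_cast Fintype.card_pos
  simp only [dotProduct, mulVec, distMatrix, of_apply, mul_one, one_mul, sum_const, card_univ,
    nsmul_eq_mul] at hray
  nlinarith

end DistanceSpectrum

theorem dcube_stmt11 {V : Type*} [Fintype V] [DecidableEq V] (G : SimpleGraph V)
    (hconn : G.Connected) (δ0 δ1 δ2 : ℝ) (h21 : δ2 < δ1) (h10 : δ1 < δ0)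
    (hspec : (distSpec G).toFinset = {δ0, δ1, δ2})
    (m : ℕ) (hm : 2 ≤ m)
    (h0 : (distSpec G).count δ0 = 1)
    (h1 : (distSpec G).count δ1 = m)
    (h2 : (distSpec G).count δ2 = m) :
    Fintype.card V = 2 * m + 1 ∧
      ∃ c : ℤ, 3 ≤ c ∧ δ0 = (c : ℝ) * ((Fintype.card V : ℝ) - 1) / 2 := by
  have hmem : ∀ δ, δ ∈ distSpec G ↔ δ = δ0 ∨ δ = δ1 ∨ δ = δ2 := fun δ => by
    rw [← Multiset.mem_toFinset, hspec]
    simp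
  have hdecomp : distSpec G = {δ0} + m • {δ1} + m • {δ2} := by
    simpa [h0, h1, h2] using
      Multiset.eq_count_nsmul_add_of_toFinset_eq h10.ne' (h21.trans h10).ne' h21.ne' hspec
  have hcard : Fintype.card V = 2 * m + 1 := by
    simpa [hdecomp, two_mul, add_comm] using (card_distSpec G).symm
  have htrace : δ0 + m * (δ1 + δ2) = 0 := by
    simpa [hdecomp, Multiset.sum_nsmul, mul_add, add_assoc] using sum_distSpec G
  obtain ⟨q, hq⟩ : δ0 ∈ (algebraMap ℚ ℝ).range :=
    mem_range_algebraMap_of_count_distSpec_unique G ((hmem δ0).mpr (.inl rfl)) fun β hβ => by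
      rcases (hmem β).mp (Multiset.count_pos.mp (by omega)) with rfl | rfl | rfl <;>
        first | rfl | omega
  obtain ⟨z, hz⟩ : ∃ z : ℤ, δ1 + δ2 = z := by
    refine exists_intCast_eq_of_isIntegral
      ((isIntegral_of_mem_distSpec G ((hmem δ1).mpr (by simp))).add
        (isIntegral_of_mem_distSpec G ((hmem δ2).mpr (by simp)))) ⟨-q / m, ?_⟩
    rw [map_div₀, map_neg, map_natCast, hq, div_eq_iff (by positivity)]
    linarith
  have hG : G ≠ ⊤ := ne_top_of_two_lt_card_toFinset_distSpec G (by
    rw [hspec, card_eq_three.mpr ⟨δ0, δ1, δ2, h10.ne', (h21.trans h10).ne', h21.ne', rfl⟩]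
    norm_num)
  have hδ0 : (Fintype.card V : ℝ) - 1 < δ0 := card_sub_one_lt_of_forall_mem_distSpec_le G hconn hG
    fun δ hδ => by rcases (hmem δ).mp hδ with rfl | rfl | rfl <;> linarith
  rw [hcard] at hδ0 ⊢
  push_cast at hδ0 ⊢
  refine ⟨rfl, -z, ?_, by push_cast; linear_combination htrace - m * hz⟩
  have : (2 : ℝ) < -z := by nlinarith
  exact_mod_cast this
end

section
/- The distance matrix of the d-cube has rank d + 1, and its all-ones vector is an eigenvector with eigenvalue d·2^{d-1}. -/
open SimpleGraph Matrix Finset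

/-- The `d`-cube: vertices are binary `d`-tuples, adjacent iff they differ in one coordinate. -/
def cubeGraph (d : ℕ) : SimpleGraph (Fin d → Bool) where
  Adj x y := hammingDist x y = 1
  symm := ⟨fun x y h => by show hammingDist y x = 1; rwa [hammingDist_comm]⟩
  loopless := ⟨fun x h => by simp [hammingDist_self] at h⟩


/-
The graph distance of the cube is the Hamming distance, and coordinatewise
`[x i ≠ y i] = 1/2 - χᵢ(x) χᵢ(y) / 2` with `χᵢ(x) = (-1) ^ x i`. Hence `D = Mᵀ C M`, where the rows of
`M` are the characters `1, χ₁, …, χ_d` and `C = diag(d/2, -1/2, …, -1/2)`. The characters are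
orthogonal, `M Mᵀ = 2^d • 1`, so `M D Mᵀ = 4^d • C` is invertible for `d ≥ 1` and `D` has rank
exactly `d + 1`. The all-ones vector is the trivial-character row `Mᵀ e₀` of `M`, so
`D 1 = Mᵀ C (M Mᵀ) e₀ = 2^d (d/2) 1`.
-/

section Hamming

variable {ι : Type*} {β : ι → Type*} [Fintype ι] [DecidableEq ι] [∀ i, DecidableEq (β i)]

lemma hammingDist_update_self_of_ne {x : ∀ i, β i} {i : ι} {b : β i} (h : x i ≠ b) :
    hammingDist x (Function.update x i b) = 1 := by
  rw [hammingDist, Finset.card_eq_one]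
  refine ⟨i, Finset.ext fun j => ?_⟩
  by_cases hj : j = i
  · subst hj; simp [h]
  · simp [hj]

lemma hammingDist_update_add_one {x y : ∀ i, β i} {i : ι} (h : x i ≠ y i) :
    hammingDist (Function.update x i (y i)) y + 1 = hammingDist x y := by
  have hfilter : ({j | Function.update x i (y i) j ≠ y j} : Finset ι) =
      ({j | x j ≠ y j} : Finset ι).erase i := by
    ext j
    by_cases hj : j = i
    · subst hj; simp
    · simp [hj]
  rw [hammingDist, hammingDist, hfilter, Finset.card_erase_add_one (by simpa using h)]

end Hamming

section CubeGraph

variable {d : ℕ}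

lemma cubeGraph_hammingDist_le_length {x y : Fin d → Bool} (p : (cubeGraph d).Walk x y) :
    hammingDist x y ≤ p.length := by
  induction p with
  | nil => simp
  | @cons a b c hab p ih =>
    have hab : hammingDist a b = 1 := hab
    rw [Walk.length_cons]
    linarith [hammingDist_triangle a b c]

lemma cubeGraph_exists_walk_length_eq_hammingDist (x y : Fin d → Bool) :
    ∃ p : (cubeGraph d).Walk x y, p.length = hammingDist x y := by
  induction h : hammingDist x y generalizing x with
  | zero =>
    obtain rfl := hammingDist_eq_zero.mp h
    exact ⟨Walk.nil, rfl⟩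
  | succ n ih =>
    obtain ⟨i, hi⟩ := Function.ne_iff.mp (hammingDist_pos.mp (by omega : 0 < hammingDist x y))
    have hadj : (cubeGraph d).Adj x (Function.update x i (y i)) :=
      hammingDist_update_self_of_ne hi
    obtain ⟨p, hp⟩ := ih (Function.update x i (y i)) (by have := hammingDist_update_add_one hi; omega)
    exact ⟨Walk.cons hadj p, by simp [hp]⟩

lemma cubeGraph_dist (x y : Fin d → Bool) : (cubeGraph d).dist x y = hammingDist x y := by
  obtain ⟨p, hp⟩ := cubeGraph_exists_walk_length_eq_hammingDist x y
  obtain ⟨q, hq⟩ := Reachable.exists_walk_length_eq_dist ⟨p⟩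
  exact le_antisymm (hp ▸ dist_le p) (hq ▸ cubeGraph_hammingDist_le_length q)

end CubeGraph

lemma Fintype.sum_eq_zero_of_involutive_of_neg {α M : Type*} [Fintype α] [AddCommGroup M]
    [IsAddTorsionFree M] {σ : α → α} (hσ : Function.Involutive σ) {f : α → M}
    (hf : ∀ x, f (σ x) = -f x) : ∑ x, f x = 0 := by
  have h := Fintype.sum_bijective σ hσ.bijective (fun x => f (σ x)) f fun _ => rfl
  simp only [hf, Finset.sum_neg_distrib] at h
  exact neg_eq_self.mp h

section Characters

variable {d : ℕ}

def cubeChar : Option (Fin d) → (Fin d → Bool) → ℝ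
  | none, _ => 1
  | some i, x => if x i then -1 else 1

lemma cubeChar_mul_self (j : Option (Fin d)) (x : Fin d → Bool) :
    cubeChar j x * cubeChar j x = 1 := by
  cases j with
  | none => simp [cubeChar]
  | some i => by_cases h : x i <;> simp [cubeChar, h]

lemma cubeChar_update_not_self (i : Fin d) (x : Fin d → Bool) :
    cubeChar (some i) (Function.update x i (!x i)) = -cubeChar (some i) x := by
  by_cases h : x i <;> simp [cubeChar, h]

lemma cubeChar_update_not_of_ne {i : Fin d} {j : Option (Fin d)} (hj : j ≠ some i)
    (x : Fin d → Bool) : cubeChar j (Function.update x i (!x i)) = cubeChar j x := by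
  cases j with
  | none => rfl
  | some k =>
    have hk : k ≠ i := fun h => hj (h ▸ rfl)
    simp [cubeChar, Function.update_of_ne hk]

lemma sum_cubeChar_some_mul_eq_zero {i : Fin d} {k : Option (Fin d)} (hk : k ≠ some i) :
    ∑ x, cubeChar (some i) x * cubeChar k x = 0 := by
  have hflip : Function.Involutive fun x : Fin d → Bool => Function.update x i (!x i) := by
    intro x
    simp
  refine Fintype.sum_eq_zero_of_involutive_of_neg hflip fun x => ?_
  simp only [cubeChar_update_not_self, cubeChar_update_not_of_ne hk, neg_mul]

lemma sum_cubeChar_mul_cubeChar (j k : Option (Fin d)) :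
    ∑ x, cubeChar j x * cubeChar k x = if j = k then 2 ^ d else 0 := by
  split_ifs with hjk
  · simp [hjk, cubeChar_mul_self]
  · cases j with
    | some i => exact sum_cubeChar_some_mul_eq_zero (Ne.symm hjk)
    | none =>
      obtain ⟨i, rfl⟩ := Option.ne_none_iff_exists'.mp (Ne.symm hjk)
      simp_rw [mul_comm (cubeChar none _)]
      exact sum_cubeChar_some_mul_eq_zero (Option.some_ne_none i).symm

noncomputable def hammingCoeff (d : ℕ) : Option (Fin d) → ℝ
  | none => d / 2
  | some _ => -(1 / 2)

lemma hammingDist_eq_sum_cubeChar (x y : Fin d → Bool) :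
    (hammingDist x y : ℝ) = ∑ j, hammingCoeff d j * cubeChar j x * cubeChar j y := by
  have hcoord : ∀ i, (if x i ≠ y i then (1 : ℝ) else 0) =
      1 / 2 + hammingCoeff d (some i) * cubeChar (some i) x * cubeChar (some i) y := by
    intro i
    cases hx : x i <;> cases hy : y i <;> norm_num [hammingCoeff, cubeChar, hx, hy]
  rw [hammingDist, Finset.card_filter, Nat.cast_sum, Fintype.sum_option]
  simp only [Nat.cast_ite, Nat.cast_one, Nat.cast_zero, hcoord, Finset.sum_add_distrib,
    Finset.sum_const, Finset.card_univ, Fintype.card_fin, nsmul_eq_mul]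
  rw [add_left_inj, mul_one_div]
  simp only [hammingCoeff, cubeChar, mul_one]

def cubeCharMatrix (d : ℕ) : Matrix (Option (Fin d)) (Fin d → Bool) ℝ := Matrix.of cubeChar

lemma cubeCharMatrix_mul_transpose : cubeCharMatrix d * (cubeCharMatrix d)ᵀ = (2 ^ d : ℝ) • 1 := by
  ext j k
  simp [Matrix.mul_apply, cubeCharMatrix, sum_cubeChar_mul_cubeChar, Matrix.one_apply]

lemma distMatrix_cubeGraph :
    distMatrix (cubeGraph d) =
      (cubeCharMatrix d)ᵀ * Matrix.diagonal (hammingCoeff d) * cubeCharMatrix d := by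
  ext x y
  rw [Matrix.mul_apply]
  simp only [distMatrix, Matrix.of_apply, cubeGraph_dist, hammingDist_eq_sum_cubeChar,
    Matrix.mul_diagonal, Matrix.transpose_apply, cubeCharMatrix]
  refine Finset.sum_congr rfl fun j _ => ?_
  ring

end Characters

theorem Matrix.rank_transpose_mul_mul_of_isUnit {ι κ K : Type*} [Fintype ι] [Fintype κ]
    [DecidableEq ι] [Field K] (M : Matrix ι κ K) (D : Matrix ι ι K) (hM : IsUnit (M * Mᵀ))
    (hD : IsUnit D) : (Mᵀ * D * M).rank = Fintype.card ι := by
  refine le_antisymm ((rank_mul_le_left _ _).trans ((rank_mul_le_left _ _).trans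
    (rank_le_card_width _))) ?_
  have hsandwich : M * (Mᵀ * D * M) * Mᵀ = M * Mᵀ * D * (M * Mᵀ) := by
    simp only [Matrix.mul_assoc]
  calc Fintype.card ι = (M * Mᵀ * D * (M * Mᵀ)).rank :=
        (rank_of_isUnit _ ((hM.mul hD).mul hM)).symm
    _ = (M * (Mᵀ * D * M) * Mᵀ).rank := by rw [hsandwich]
    _ ≤ (M * (Mᵀ * D * M)).rank := rank_mul_le_left _ _
    _ ≤ (Mᵀ * D * M).rank := rank_mul_le_right _ _

section DistMatrix

variable {d : ℕ}

lemma rank_distMatrix_cubeGraph (hd : 1 ≤ d) : (distMatrix (cubeGraph d)).rank = d + 1 := by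
  have hM : IsUnit (cubeCharMatrix d * (cubeCharMatrix d)ᵀ) := by
    rw [cubeCharMatrix_mul_transpose, Matrix.smul_one_eq_diagonal, Matrix.isUnit_diagonal]
    exact Pi.isUnit_iff.mpr fun _ => (pow_ne_zero d two_ne_zero).isUnit
  have hD : IsUnit (Matrix.diagonal (hammingCoeff d)) := by
    refine Matrix.isUnit_diagonal.mpr (Pi.isUnit_iff.mpr fun j => Ne.isUnit ?_)
    cases j with
    | none => exact div_ne_zero (Nat.cast_ne_zero.mpr (by omega)) two_ne_zero
    | some i => norm_num [hammingCoeff]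
  rw [distMatrix_cubeGraph, Matrix.rank_transpose_mul_mul_of_isUnit _ _ hM hD,
    Fintype.card_option, Fintype.card_fin]

lemma distMatrix_cubeGraph_mulVec_one :
    distMatrix (cubeGraph d) *ᵥ (fun _ => (1 : ℝ)) = ((d : ℝ) / 2 * 2 ^ d) • fun _ => 1 := by
  set M := cubeCharMatrix d
  set e : Option (Fin d) → ℝ := Pi.single none 1
  have hone : (fun _ => (1 : ℝ)) = Mᵀ *ᵥ e := by
    ext x
    simp [e, M, cubeCharMatrix, cubeChar]
  have hCe : Matrix.diagonal (hammingCoeff d) *ᵥ e = ((d : ℝ) / 2) • e := by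
    rw [Matrix.diagonal_mulVec_single, ← Pi.single_smul, smul_eq_mul]
    rfl
  calc distMatrix (cubeGraph d) *ᵥ (fun _ => (1 : ℝ))
      = Mᵀ *ᵥ (Matrix.diagonal (hammingCoeff d) *ᵥ ((M * Mᵀ) *ᵥ e)) := by
        rw [distMatrix_cubeGraph, hone, Matrix.mulVec_mulVec, Matrix.mulVec_mulVec,
          Matrix.mulVec_mulVec, Matrix.mul_assoc, Matrix.mul_assoc]
    _ = ((d : ℝ) / 2 * 2 ^ d) • fun _ => 1 := by
        rw [cubeCharMatrix_mul_transpose, Matrix.smul_mulVec, Matrix.one_mulVec,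
          Matrix.mulVec_smul, hCe, Matrix.mulVec_smul, Matrix.mulVec_smul, ← hone, smul_smul,
          mul_comm]

end DistMatrix

theorem dcube_stmt14 (d : ℕ) (hd : 1 ≤ d) :
    (distMatrix (cubeGraph d)).rank = d + 1 ∧
      distMatrix (cubeGraph d) *ᵥ (fun _ => (1 : ℝ)) =
        ((d : ℝ) * 2 ^ (d - 1)) • fun _ => (1 : ℝ) := by
  refine ⟨rank_distMatrix_cubeGraph hd, ?_⟩
  rw [distMatrix_cubeGraph_mulVec_one]
  obtain ⟨k, rfl⟩ := Nat.exists_eq_add_of_le' hd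
  rw [Nat.add_sub_cancel, pow_succ]
  congr 1
  ring
end
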